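/- arXiv:2605.02957 — 3 statements merged into one kernel-verified Lean document; each statement's English description precedes it below -/
import Mathlib

section
/- If an NFA B with state set Q³ (cube construction for √L) has an accepting run on a word w, then there exist p ∈ Q, q₀ ∈ Q₀, and f ∈ F such that p ∈ δ(q₀, w) and f ∈ δ(p, w); consequently ww ∈ L(A). -/
/-- The cube-construction NFA for `√L` built from an NFA `A`. -/
def cubeNFA {α σ : Type} (M : NFA α σ) : NFA α (σ × σ × σ) where
  step := fun x a => {y | y.1 = x.1 ∧ y.2.1 ∈ M.step x.2.1 a ∧ y.2.2 ∈ M.step x.2.2 a}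
  start := {x | x.2.1 ∈ M.start ∧ x.2.2 = x.1}
  accept := {x | x.2.1 = x.1 ∧ x.2.2 ∈ M.accept}

lemma evalFrom_mono {α σ : Type} (M : NFA α σ) {S T : Set σ} (h : S ⊆ T) (w : List α) :
    M.evalFrom S w ⊆ M.evalFrom T w := by
  induction w generalizing S T with
  | nil => simpa using h
  | cons a w ih =>
    simp only [NFA.evalFrom, List.foldl_cons] at *
    refine ih ?_
    intro q hq
    rw [NFA.mem_stepSet] at hq ⊢
    obtain ⟨s, hs, hstep⟩ := hq
    exact ⟨s, h hs, hstep⟩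

lemma evalFrom_append {α σ : Type} (M : NFA α σ) (S : Set σ) (u v : List α) :
    M.evalFrom S (u ++ v) = M.evalFrom (M.evalFrom S u) v := by
  simp [NFA.evalFrom, List.foldl_append]

lemma cube_eval {α σ : Type} (M : NFA α σ) (w : List α) (S : Set (σ × σ × σ))
    (x : σ × σ × σ) (hx : x ∈ (cubeNFA M).evalFrom S w) :
    ∃ s ∈ S, x.1 = s.1 ∧ x.2.1 ∈ M.evalFrom {s.2.1} w ∧ x.2.2 ∈ M.evalFrom {s.2.2} w := by
  induction w generalizing S with
  | nil => exact ⟨x, by simpa using hx, rfl, by simp, by simp⟩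
  | cons a w ih =>
    rw [show (a :: w) = [a] ++ w by rfl, evalFrom_append] at hx
    obtain ⟨y, hy, h1, h2, h3⟩ := ih _ hx
    rw [NFA.evalFrom_singleton, NFA.mem_stepSet] at hy
    obtain ⟨s, hs, hy1, hy2, hy3⟩ := hy
    refine ⟨s, hs, h1.trans hy1, ?_, ?_⟩
    · rw [show (a :: w) = [a] ++ w by rfl, evalFrom_append]
      exact evalFrom_mono M (by rintro q rfl; rw [NFA.evalFrom_singleton, NFA.mem_stepSet]; exact ⟨_, rfl, hy2⟩) w h2
    · rw [show (a :: w) = [a] ++ w by rfl, evalFrom_append]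
      exact evalFrom_mono M (by rintro q rfl; rw [NFA.evalFrom_singleton, NFA.mem_stepSet]; exact ⟨_, rfl, hy3⟩) w h3

/-- If the cube NFA accepts `w`, there are `p`, `q₀ ∈ Q₀`, `f ∈ F` with
`p ∈ δ(q₀, w)` and `f ∈ δ(p, w)`; consequently `ww ∈ L(A)`. -/
theorem cubeNFA_accepts_implies {α σ : Type} (M : NFA α σ) (w : List α)
    (hw : w ∈ (cubeNFA M).accepts) :
    (∃ p : σ, ∃ q₀ ∈ M.start, ∃ f ∈ M.accept,
      p ∈ M.evalFrom {q₀} w ∧ f ∈ M.evalFrom {p} w) ∧ w ++ w ∈ M.accepts := by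
  rw [NFA.mem_accepts] at hw
  obtain ⟨x, hacc, hx⟩ := hw
  obtain ⟨s, hs, h1, h2, h3⟩ := cube_eval M w _ x hx
  obtain ⟨hs1, hs2⟩ := hs
  obtain ⟨hx1, hx2⟩ := hacc
  -- s = (p, q₀, p), x = (p, p', f) with p' = p
  rw [hs2] at h3
  rw [hx1] at h2
  rw [h1] at h2
  refine ⟨⟨s.1, s.2.1, hs1, x.2.2, hx2, h2, h3⟩, ?_⟩
  rw [NFA.mem_accepts]
  refine ⟨x.2.2, hx2, ?_⟩
  have : M.eval (w ++ w) = M.evalFrom (M.evalFrom M.start w) w := evalFrom_append M _ w w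
  rw [NFA.eval] at *
  rw [this]
  have h2' : s.1 ∈ M.evalFrom M.start w := evalFrom_mono M (by simpa using hs1) w h2
  exact evalFrom_mono M (by simpa using h2') w h3
end

section
/- For the lower-bound NFA A_n and triples X₁ = (p₁,q₁,r₁), X₂ = (p₂,q₂,r₂) ∈ Q³, the word a_{X₁} b_{X₂} a_{X₁} b_{X₂} is accepted by A_n if and only if at least one of the following seven conditions holds: (1) p₁ = p₂ ∈ Q₀ and r₁ = r₂ = q₂; (2) p₁ ∈ Q₀, p₂ = l₁, r₁ = q₂, q₁ = r₂; (3) p₁ = p₂, q₁ = q₂, r₁ = r₂; (4) p₁ = p₂ ∈ F and r₁ = q₁ = q₂; (5) p₂ = l₁ and q₁ = q₂ = r₂; (6) p₁ = m₂ and q₁ = r₁ = r₂; (7) p₁ = m₂, r₁ = q₂, q₁ = r₂, p₂ ∈ F. -/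
/-- The function `l` of the lower-bound construction: `l(0)=1`, `l(1)=2`, else `0`. -/
def lf (n : ℕ) (hn : 6 ≤ n) (p : Fin n) : Fin n :=
  if p.val = 0 then ⟨1, by omega⟩ else if p.val = 1 then ⟨2, by omega⟩ else ⟨0, by omega⟩

/-- The function `m` of the lower-bound construction: `m(3)=4`, `m(4)=5`, else `3`. -/
def mf (n : ℕ) (hn : 6 ≤ n) (p : Fin n) : Fin n :=
  if p.val = 3 then ⟨4, by omega⟩ else if p.val = 4 then ⟨5, by omega⟩ else ⟨3, by omega⟩

/-- The lower-bound NFA `A_n`: states `{0,…,n−1}`, initial states `{0,1,2}`,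
final states `{3,4,5}`, alphabet `{a_X, b_X : X ∈ Q³}` encoded as
`Bool × Fin n × Fin n × Fin n` (`false` for `a_X`, `true` for `b_X`).
For `X = (p,q,r)`: `a_X` maps `l(p) ↦ q` and `p ↦ r`;
`b_X` maps `q ↦ p` and `r ↦ m(p)`. -/
def lowerNFA (n : ℕ) (hn : 6 ≤ n) : NFA (Bool × Fin n × Fin n × Fin n) (Fin n) where
  step := fun s c =>
    match c with
    | (false, p, q, r) => (if s = lf n hn p then {q} else ∅) ∪ (if s = p then {r} else ∅)
    | (true, p, q, r) => (if s = q then {p} else ∅) ∪ (if s = r then {mf n hn p} else ∅)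
  start := {s | s.val < 3}
  accept := {s | 3 ≤ s.val ∧ s.val < 6}


lemma lf_val_lt (n : ℕ) (hn : 6 ≤ n) (p : Fin n) : (lf n hn p).val < 3 := by
  unfold lf; split <;> [skip; split] <;> simp

lemma not_three_le_lf (n : ℕ) (hn : 6 ≤ n) (p : Fin n) : ¬ 3 ≤ (lf n hn p).val := by
  have := lf_val_lt n hn p; omega

lemma three_le_mf (n : ℕ) (hn : 6 ≤ n) (p : Fin n) : 3 ≤ (mf n hn p).val := by
  unfold mf; split <;> [skip; split] <;> simp

lemma mf_val_lt (n : ℕ) (hn : 6 ≤ n) (p : Fin n) : (mf n hn p).val < 6 := by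
  unfold mf; split <;> [skip; split] <;> simp

lemma not_mf_lt_three (n : ℕ) (hn : 6 ≤ n) (p : Fin n) : ¬ (mf n hn p).val < 3 := by
  have := three_le_mf n hn p; omega

lemma lf_ne_mf (n : ℕ) (hn : 6 ≤ n) (p q : Fin n) : lf n hn p ≠ mf n hn q := by
  intro h
  have h1 := lf_val_lt n hn p
  have h2 := three_le_mf n hn q
  rw [h] at h1; omega

lemma mf_ne_lf (n : ℕ) (hn : 6 ≤ n) (p q : Fin n) : mf n hn p ≠ lf n hn q :=
  (lf_ne_mf n hn q p).symm

set_option maxHeartbeats 1000000 in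
/-- Characterization of acceptance of `a_{X₁} b_{X₂} a_{X₁} b_{X₂}` by `A_n`
via the seven cases. -/
theorem lowerNFA_seven_cases (n : ℕ) (hn : 6 ≤ n)
    (p₁ q₁ r₁ p₂ q₂ r₂ : Fin n) :
    [((false : Bool), (p₁, q₁, r₁)), (true, (p₂, q₂, r₂)),
     (false, (p₁, q₁, r₁)), (true, (p₂, q₂, r₂))] ∈ (lowerNFA n hn).accepts ↔
      ((p₁ = p₂ ∧ p₁.val < 3 ∧ r₁ = r₂ ∧ r₂ = q₂) ∨
       (p₁.val < 3 ∧ p₂ = lf n hn p₁ ∧ r₁ = q₂ ∧ q₁ = r₂) ∨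
       (p₁ = p₂ ∧ q₁ = q₂ ∧ r₁ = r₂) ∨
       (p₁ = p₂ ∧ 3 ≤ p₁.val ∧ p₁.val < 6 ∧ r₁ = q₁ ∧ q₁ = q₂) ∨
       (p₂ = lf n hn p₁ ∧ q₁ = q₂ ∧ q₂ = r₂) ∨
       (p₁ = mf n hn p₂ ∧ q₁ = r₁ ∧ r₁ = r₂) ∨
       (p₁ = mf n hn p₂ ∧ r₁ = q₂ ∧ q₁ = r₂ ∧ 3 ≤ p₂.val ∧ p₂.val < 6)) := by
  have hl : ∀ p : Fin n, (lf n hn p).val < 3 := lf_val_lt n hn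
  have hm : ∀ p : Fin n, 3 ≤ (mf n hn p).val ∧ (mf n hn p).val < 6 :=
    fun p => ⟨three_le_mf n hn p, mf_val_lt n hn p⟩
  rw [NFA.mem_accepts]
  simp only [NFA.evalFrom, List.foldl_cons, List.foldl_nil,
    NFA.mem_stepSet, Set.mem_setOf_eq, lowerNFA, Set.mem_union, Set.mem_ite_empty_right,
    Set.mem_singleton_iff]
  constructor
  · rintro ⟨S, ⟨h3, h6⟩, t3, ⟨t1, ⟨t2, ⟨t0, h0, (⟨e1, e2⟩ | ⟨e1, e2⟩)⟩,
      (⟨e3, e4⟩ | ⟨e3, e4⟩)⟩, (⟨e5, e6⟩ | ⟨e5, e6⟩)⟩, (⟨e7, e8⟩ | ⟨e7, e8⟩)⟩ <;>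
      subst_vars <;>
      first
        | omega
        | simp_all [not_three_le_lf, not_mf_lt_three, lf_ne_mf, mf_ne_lf]
  · rintro (⟨e1, h, e2, e3⟩ | ⟨h, e1, e2, e3⟩ | ⟨e1, e2, e3⟩ | ⟨e1, h1, h2, e2, e3⟩ |
      ⟨e1, e2, e3⟩ | ⟨e1, e2, e3⟩ | ⟨e1, e2, e3, h1, h2⟩) <;> subst_vars
    · exact ⟨_, hm _, _, ⟨_, ⟨_, ⟨_, h, Or.inr ⟨rfl, rfl⟩⟩, Or.inl ⟨rfl, rfl⟩⟩,
        Or.inr ⟨rfl, rfl⟩⟩, Or.inr ⟨rfl, rfl⟩⟩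
    · exact ⟨_, hm _, _, ⟨_, ⟨_, ⟨_, h, Or.inr ⟨rfl, rfl⟩⟩, Or.inl ⟨rfl, rfl⟩⟩,
        Or.inl ⟨rfl, rfl⟩⟩, Or.inr ⟨rfl, rfl⟩⟩
    · exact ⟨_, hm _, _, ⟨_, ⟨_, ⟨_, hl _, Or.inl ⟨rfl, rfl⟩⟩, Or.inl ⟨rfl, rfl⟩⟩,
        Or.inr ⟨rfl, rfl⟩⟩, Or.inr ⟨rfl, rfl⟩⟩
    · exact ⟨_, ⟨h1, h2⟩, _, ⟨_, ⟨_, ⟨_, hl _, Or.inl ⟨rfl, rfl⟩⟩, Or.inl ⟨rfl, rfl⟩⟩,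
        Or.inr ⟨rfl, rfl⟩⟩, Or.inl ⟨rfl, rfl⟩⟩
    · exact ⟨_, hm _, _, ⟨_, ⟨_, ⟨_, hl _, Or.inl ⟨rfl, rfl⟩⟩, Or.inl ⟨rfl, rfl⟩⟩,
        Or.inl ⟨rfl, rfl⟩⟩, Or.inr ⟨rfl, rfl⟩⟩
    · exact ⟨_, hm _, _, ⟨_, ⟨_, ⟨_, hl _, Or.inl ⟨rfl, rfl⟩⟩, Or.inr ⟨rfl, rfl⟩⟩,
        Or.inr ⟨rfl, rfl⟩⟩, Or.inr ⟨rfl, rfl⟩⟩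
    · exact ⟨_, ⟨h1, h2⟩, _, ⟨_, ⟨_, ⟨_, hl _, Or.inl ⟨rfl, rfl⟩⟩, Or.inr ⟨rfl, rfl⟩⟩,
        Or.inr ⟨rfl, rfl⟩⟩, Or.inl ⟨rfl, rfl⟩⟩
end

section
/- The set S = { (a_X, b_X) : X ∈ Q³ } of n³ pairs is a fooling set for √L(A_n): for every X, a_X b_X ∈ √L(A_n), and for all distinct X₃, X₄ ∈ Q³, at least one of a_{X₃} b_{X₄} and a_{X₄} b_{X₃} is not in √L(A_n). -/
section helpers
variable {n : ℕ} {hn : 6 ≤ n}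

lemma lf_lt3 (p : Fin n) : (lf n hn p).val < 3 := by
  unfold lf; split_ifs <;> simp

lemma mf_ge3 (p : Fin n) : 3 ≤ (mf n hn p).val ∧ (mf n hn p).val < 6 := by
  unfold mf; split_ifs <;> simp

lemma lf_ne (p : Fin n) : lf n hn p ≠ p := by
  unfold lf; split_ifs with h1 h2 <;> (intro h; rw [Fin.ext_iff] at h; simp at h <;> omega)

lemma mf_ne (p : Fin n) : mf n hn p ≠ p := by
  unfold mf; split_ifs with h1 h2 <;> (intro h; rw [Fin.ext_iff] at h; simp at h <;> omega)

lemma lf_lf_ne (p : Fin n) : lf n hn (lf n hn p) ≠ p := by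
  unfold lf; split_ifs with h1 h2 <;> (intro h; rw [Fin.ext_iff] at h; simp_all <;> omega)

lemma mf_mf_ne (p : Fin n) : mf n hn (mf n hn p) ≠ p := by
  unfold mf; split_ifs with h1 h2 <;> (intro h; rw [Fin.ext_iff] at h; simp_all <;> omega)

lemma step_false {s t p q r : Fin n} :
    t ∈ (lowerNFA n hn).step s (false, p, q, r) ↔ (s = lf n hn p ∧ t = q) ∨ (s = p ∧ t = r) := by
  simp [lowerNFA]

lemma step_true {s t p q r : Fin n} :
    t ∈ (lowerNFA n hn).step s (true, p, q, r) ↔ (s = q ∧ t = p) ∨ (s = r ∧ t = mf n hn p) := by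
  simp [lowerNFA]

lemma mem4 {p q r p' q' r' : Fin n} :
    [(false,(p,q,r)), (true,(p',q',r')), (false,(p,q,r)), (true,(p',q',r'))] ∈ (lowerNFA n hn).accepts ↔
    ∃ s0 s1 s2 s3 s4 : Fin n, s0.val < 3 ∧ (3 ≤ s4.val ∧ s4.val < 6) ∧
      s1 ∈ (lowerNFA n hn).step s0 (false,(p,q,r)) ∧
      s2 ∈ (lowerNFA n hn).step s1 (true,(p',q',r')) ∧
      s3 ∈ (lowerNFA n hn).step s2 (false,(p,q,r)) ∧
      s4 ∈ (lowerNFA n hn).step s3 (true,(p',q',r')) := by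
  rw [NFA.mem_accepts]
  simp only [NFA.evalFrom, List.foldl_cons, List.foldl_nil, NFA.mem_stepSet]
  constructor
  · rintro ⟨s4, hacc, s3, ⟨s2, ⟨s1, ⟨s0, h0, h1⟩, h2⟩, h3⟩, h4⟩
    exact ⟨s0, s1, s2, s3, s4, h0, hacc, h1, h2, h3, h4⟩
  · rintro ⟨s0, s1, s2, s3, s4, h0, hacc, h1, h2, h3, h4⟩
    exact ⟨s4, hacc, s3, ⟨s2, ⟨s1, ⟨s0, h0, h1⟩, h2⟩, h3⟩, h4⟩

lemma word_cases {p q r p' q' r' : Fin n}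
    (h : [(false,(p,q,r)), (true,(p',q',r')), (false,(p,q,r)), (true,(p',q',r'))]
      ∈ (lowerNFA n hn).accepts) :
    (p' = lf n hn p ∧ q = r' ∧ (q = q' ∨ (r = q' ∧ p.val < 3))) ∨
    (p = p' ∧ (q = q' ∨ (r = q' ∧ p.val < 3)) ∧ ((r = q' ∧ 3 ≤ p.val) ∨ r = r')) ∨
    (p = mf n hn p' ∧ q = r' ∧ (r = q' ∨ r = r')) := by
  rw [mem4] at h
  obtain ⟨s0, s1, s2, s3, s4, h0, hacc, h1, h2, h3, h4⟩ := h
  rw [step_false] at h1 h3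
  rw [step_true] at h2 h4
  have hl := lf_lt3 (hn := hn) p
  have hm := mf_ge3 (hn := hn) p'
  rcases h1 with ⟨e0, e1⟩ | ⟨e0, e1⟩ <;> rcases h2 with ⟨e2, e3⟩ | ⟨e2, e3⟩ <;>
    rcases h3 with ⟨e4, e5⟩ | ⟨e4, e5⟩ <;> rcases h4 with ⟨e6, e7⟩ | ⟨e6, e7⟩ <;>
    simp only [Fin.ext_iff] at * <;> omega
end helpers

/-- The set `{(a_X, b_X) : X ∈ Q³}` of `n³` pairs is a fooling set for `√L(A_n)`. -/
theorem lowerNFA_fooling_set (n : ℕ) (hn : 6 ≤ n) :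
    (∀ X : Fin n × Fin n × Fin n,
      [(false, X), (true, X)] ∈
        {w : List (Bool × Fin n × Fin n × Fin n) | w ++ w ∈ (lowerNFA n hn).accepts}) ∧
    (∀ X₃ X₄ : Fin n × Fin n × Fin n, X₃ ≠ X₄ →
      [(false, X₃), (true, X₄)] ∉
        {w : List (Bool × Fin n × Fin n × Fin n) | w ++ w ∈ (lowerNFA n hn).accepts} ∨
      [(false, X₄), (true, X₃)] ∉
        {w : List (Bool × Fin n × Fin n × Fin n) | w ++ w ∈ (lowerNFA n hn).accepts}) := by
  constructor
  · rintro ⟨p, q, r⟩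
    show [(false,(p,q,r)), (true,(p,q,r)), (false,(p,q,r)), (true,(p,q,r))]
      ∈ (lowerNFA n hn).accepts
    rw [mem4]
    refine ⟨lf n hn p, q, p, r, mf n hn p, lf_lt3 p, mf_ge3 p, ?_, ?_, ?_, ?_⟩
    · rw [step_false]; exact Or.inl ⟨rfl, rfl⟩
    · rw [step_true]; exact Or.inl ⟨rfl, rfl⟩
    · rw [step_false]; exact Or.inr ⟨rfl, rfl⟩
    · rw [step_true]; exact Or.inr ⟨rfl, rfl⟩
  · rintro ⟨p, q, r⟩ ⟨p', q', r'⟩ hne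
    by_contra hc
    push_neg at hc
    obtain ⟨hA, hB⟩ := hc
    have h1 := word_cases (hn := hn) (p := p) (q := q) (r := r) (p' := p') (q' := q') (r' := r') hA
    have h2 := word_cases (hn := hn) (p := p') (q := q') (r := r') (p' := p) (q' := q) (r' := r) hB
    apply hne
    rcases h1 with ⟨hp, hq, hd⟩ | ⟨hp, hd1, hd2⟩ | ⟨hp, hq, hd⟩ <;>
      rcases h2 with ⟨hp', hq', hd'⟩ | ⟨hp', hd1', hd2'⟩ | ⟨hp', hq', hd'⟩
    · rw [hp] at hp'; exact absurd hp'.symm (lf_lf_ne p)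
    · rw [hp'] at hp; exact absurd hp.symm (lf_ne p)
    · exfalso
      have h3 : lf n hn p = mf n hn p := hp.symm.trans hp'
      have h4 := lf_lt3 (hn := hn) p
      have h5 := mf_ge3 (hn := hn) p
      rw [Fin.ext_iff] at h3; omega
    · rw [← hp] at hp'; exact absurd hp'.symm (lf_ne p)
    · simp only [Prod.mk.injEq]
      simp only [Fin.ext_iff] at hp hd1 hd2 hd1' hd2' ⊢
      omega
    · rw [← hp] at hp'; exact absurd hp'.symm (mf_ne p)
    · exfalso
      have h3 : mf n hn p' = lf n hn p' := hp.symm.trans hp'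
      have h4 := lf_lt3 (hn := hn) p'
      have h5 := mf_ge3 (hn := hn) p'
      rw [Fin.ext_iff] at h3; omega
    · rw [hp'] at hp; exact absurd hp.symm (mf_ne p)
    · rw [hp] at hp'; exact absurd hp'.symm (mf_mf_ne p')
end
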